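/- (Extended Maximum Projection Lemma) For any boolean matrix M, any integers 1 ≤ ℓ ≤ p, and any reals 0 < x, y ≤ 1, D(⟨M,p,x,y⟩) ≥ D(⟨M,ℓ,x,y^{ℓ/p}⟩). -/

import Mathlib

/-- A deterministic two-party communication protocol over `X × Y` with range `Z`:
a binary tree whose internal nodes are labeled by a function of the row player's
input or of the column player's input, and whose leaves are labeled by outputs. -/
inductive Protocol (X Y Z : Type) : Type where
  | leaf : Z → Protocol X Y Z
  | nodeA : (X → Bool) → Protocol X Y Z → Protocol X Y Z → Protocol X Y Z
  | nodeB : (Y → Bool) → Protocol X Y Z → Protocol X Y Z → Protocol X Y Z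

namespace Protocol

/-- The value computed by a protocol on input `(x, y)`. -/
def eval {X Y Z : Type} : Protocol X Y Z → X → Y → Z
  | leaf z, _, _ => z
  | nodeA a l r, x, y => if a x then (r.eval x y) else (l.eval x y)
  | nodeB b l r, x, y => if b y then (r.eval x y) else (l.eval x y)

/-- The depth (cost) of a protocol. -/
def depth {X Y Z : Type} : Protocol X Y Z → ℕ
  | leaf _ => 0
  | nodeA _ l r => max (depth l) (depth r) + 1
  | nodeB _ l r => max (depth l) (depth r) + 1

end Protocol

/-- A protocol computes `f` if its output on every input `(x, y)` is `f x y`. -/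
def Computes {X Y Z : Type} (P : Protocol X Y Z) (f : X → Y → Z) : Prop :=
  ∀ x y, P.eval x y = f x y

/-- Deterministic communication complexity: the minimum depth of a protocol computing `f`. -/
noncomputable def commC {X Y Z : Type} (f : X → Y → Z) : ℕ :=
  sInf {d : ℕ | ∃ P : Protocol X Y Z, Computes P f ∧ P.depth = d}

/-- Communication complexity of a boolean matrix. -/
noncomputable def matD {m n : ℕ} (M : Matrix (Fin m) (Fin n) Bool) : ℕ :=
  commC (fun i j => M i j)

/-- The direct sum `f^ℓ` of a two-argument function. -/
def directSum {X Y Z : Type} (f : X → Y → Z) (ℓ : ℕ) :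
    (Fin ℓ → X) → (Fin ℓ → Y) → (Fin ℓ → Z) :=
  fun x y i => f (x i) (y i)

/-- The interlacing operation on functions: `f^{⊘k} ((i,x), (y₁,…,y_k)) = f (x, y_i)`. -/
def funInterlace {X Y : Type} (f : X → Y → Bool) (k : ℕ) :
    (Fin k × X) → (Fin k → Y) → Bool :=
  fun ix ys => f ix.2 (ys ix.1)

/-- The interlacing operation on matrices: `A^{⊘p}` is the `mp × n^p` matrix whose
entry at `(i, j)` is `A (i % m) ((j / n^⌊i/m⌋) % n)`. -/
def interlace {m n : ℕ} (A : Matrix (Fin m) (Fin n) Bool) (p : ℕ) :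
    Matrix (Fin (m * p)) (Fin (n ^ p)) Bool :=
  Matrix.of fun i j =>
    have hm : 0 < m := by
      rcases Nat.eq_zero_or_pos m with h | h
      · exact absurd i.isLt (by simp [h])
      · exact h
    have hp : 0 < p := by
      rcases Nat.eq_zero_or_pos p with h | h
      · exact absurd i.isLt (by simp [h])
      · exact h
    have hn : 0 < n := by
      rcases Nat.eq_zero_or_pos n with h | h
      · exact absurd j.isLt (by simp [h, Nat.zero_pow hp])
      · exact h
    A ⟨(i : ℕ) % m, Nat.mod_lt _ hm⟩ ⟨((j : ℕ) / n ^ ((i : ℕ) / m)) % n, Nat.mod_lt _ hn⟩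

/-- Extraction of the rows `R` and columns `C` of a matrix (in sorted order). -/
def extract {m n : ℕ} (A : Matrix (Fin m) (Fin n) Bool)
    (R : Finset (Fin m)) (C : Finset (Fin n)) :
    Matrix (Fin R.card) (Fin C.card) Bool :=
  Matrix.of fun i j => A (R.orderIsoOfFin rfl i).1 (C.orderIsoOfFin rfl j).1

/-- `G` is a subgame of `H`: a copy of `G` appears in `H` (on some rows and columns). -/
def Subgame {a b c d : ℕ} (G : Matrix (Fin a) (Fin b) Bool)
    (H : Matrix (Fin c) (Fin d) Bool) : Prop :=
  ∃ (σ : Fin a → Fin c) (τ : Fin b → Fin d),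
    Function.Injective σ ∧ Function.Injective τ ∧ ∀ i j, G i j = H (σ i) (τ j)

/-- `R ⊆ {0,…,mp−1}` is `m,T,p`-equipartitioned: every block `[mγ, m(γ+1))` contains
exactly `⌈T⌉` selected rows. -/
def Equipartitioned (m : ℕ) (T : ℝ) (p : ℕ) (R : Finset (Fin (m * p))) : Prop :=
  ∀ γ < p, (R.filter (fun r : Fin (m * p) => m * γ ≤ (r : ℕ) ∧ (r : ℕ) < m * (γ + 1))).card = ⌈T⌉₊

/-- `D(⟨M,p,x,y⟩)`: the minimum communication complexity over the bracket set, the set of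
extractions of `M^{⊘⌈p⌉}` along an `m,⌈mx⌉,⌈p⌉`-equipartitioned row selection and a column
selection of size `⌈n^⌈p⌉·y⌉`.  (Non-integer numbers of interlaced copies are rounded up.) -/
noncomputable def bracketD {m n : ℕ} (M : Matrix (Fin m) (Fin n) Bool)
    (p x y : ℝ) : ℕ :=
  sInf { d : ℕ | ∃ (R : Finset (Fin (m * ⌈p⌉₊))) (C : Finset (Fin (n ^ ⌈p⌉₊))),
    Equipartitioned m ((m : ℝ) * x) ⌈p⌉₊ R ∧
    C.card = ⌈(n : ℝ) ^ (⌈p⌉₊ : ℕ) * y⌉₊ ∧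
    d = matD (extract (interlace M ⌈p⌉₊) R C) }

/-- Dimensions of the alternating communication game `φ_i`. -/
def phiDim (B : ℕ) : ℕ → ℕ × ℕ
  | 0 => (1, 2)
  | i + 1 => ((phiDim B i).2 ^ B, (phiDim B i).1 * B)

/-- The alternating communication game family: `φ₀ = [1 0]`, `φ_{i+1} = (φ_i^{⊘B})ᵀ`. -/
def phi (B : ℕ) : (i : ℕ) → Matrix (Fin (phiDim B i).1) (Fin (phiDim B i).2) Bool
  | 0 => Matrix.of ![![true, false]]
  | i + 1 => (interlace (phi B i) B).transpose

-- The row part `S` of the `Q`-projection of `(R, C)`.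
open Classical in
noncomputable def rowProj {m p : ℕ} (Q : Finset (Fin p)) (R : Finset (Fin (m * p))) :
    Finset (Fin (m * Q.card)) :=
  Finset.univ.filter (fun s : Fin (m * Q.card) =>
    ∃ r ∈ R, (r : ℕ) % m = (s : ℕ) % m ∧
      (r : ℕ) / m = ((Q.orderIsoOfFin rfl ⟨(s : ℕ) / m,
        Nat.div_lt_of_lt_mul s.isLt⟩).1 : ℕ))

-- The column part `D` of the `Q`-projection of `(R, C)`: the set of numbers whose base-`n`
-- digits are the digits of some `c ∈ C` at the positions of `Q` (in increasing order).
open Classical in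
noncomputable def colProj {n p : ℕ} (Q : Finset (Fin p)) (C : Finset (Fin (n ^ p))) :
    Finset (Fin (n ^ Q.card)) :=
  Finset.univ.filter (fun d : Fin (n ^ Q.card) =>
    ∃ c ∈ C, ∀ γ : Fin Q.card,
      (d : ℕ) / n ^ (γ : ℕ) % n =
        (c : ℕ) / n ^ (((Q.orderIsoOfFin rfl γ).1 : ℕ)) % n)


/-! ### Auxiliary machinery -/

namespace Protocol

def comap {X Y Z X' Y' : Type} (σ : X → X') (τ : Y → Y') :
    Protocol X' Y' Z → Protocol X Y Z
  | leaf z => leaf z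
  | nodeA a l r => nodeA (a ∘ σ) (comap σ τ l) (comap σ τ r)
  | nodeB b l r => nodeB (b ∘ τ) (comap σ τ l) (comap σ τ r)

lemma eval_comap {X Y Z X' Y' : Type} (σ : X → X') (τ : Y → Y')
    (P : Protocol X' Y' Z) (x : X) (y : Y) :
    (P.comap σ τ).eval x y = P.eval (σ x) (τ y) := by
  induction P with
  | leaf z => rfl
  | nodeA a l r hl hr => simp [comap, eval, hl, hr]
  | nodeB b l r hl hr => simp [comap, eval, hl, hr]

lemma depth_comap {X Y Z X' Y' : Type} (σ : X → X') (τ : Y → Y')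
    (P : Protocol X' Y' Z) : (P.comap σ τ).depth = P.depth := by
  induction P with
  | leaf z => rfl
  | nodeA a l r hl hr => simp [comap, depth, hl, hr]
  | nodeB b l r hl hr => simp [comap, depth, hl, hr]

end Protocol

section protoexists

variable {X Y Z : Type} [DecidableEq X] [DecidableEq Y]

def protoY (z0 : Z) (g : Y → Z) : List Y → Protocol X Y Z
  | [] => .leaf z0
  | y :: t => .nodeB (fun y' => decide (y' = y)) (protoY z0 g t) (.leaf (g y))

omit [DecidableEq X] in
lemma eval_protoY (z0 : Z) (g : Y → Z) (ys : List Y) (x : X) (y : Y) (hy : y ∈ ys) :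
    (protoY z0 g ys).eval x y = g y := by
  induction ys with
  | nil => cases hy
  | cons a t ih =>
    rcases List.mem_cons.1 hy with h | h
    · simp [protoY, Protocol.eval, h]
    · by_cases hya : y = a
      · simp [protoY, Protocol.eval, hya]
      · simp [protoY, Protocol.eval, hya, ih h]

def protoX (z0 : Z) (f : X → Y → Z) (ys : List Y) : List X → Protocol X Y Z
  | [] => .leaf z0
  | x :: t => .nodeA (fun x' => decide (x' = x)) (protoX z0 f ys t) (protoY z0 (f x) ys)

lemma eval_protoX (z0 : Z) (f : X → Y → Z) (ys : List Y) (xs : List X) (x : X) (y : Y)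
    (hx : x ∈ xs) (hy : y ∈ ys) :
    (protoX z0 f ys xs).eval x y = f x y := by
  induction xs with
  | nil => cases hx
  | cons a t ih =>
    rcases List.mem_cons.1 hx with h | h
    · simp [protoX, Protocol.eval, h, eval_protoY z0 (f a) ys a y hy]
    · by_cases hxa : x = a
      · simp [protoX, Protocol.eval, hxa, eval_protoY z0 (f a) ys a y hy]
      · simp [protoX, Protocol.eval, hxa, ih h]

lemma exists_protocol [Fintype X] [Fintype Y] (z0 : Z) (f : X → Y → Z) :
    ∃ P : Protocol X Y Z, Computes P f :=
  ⟨protoX z0 f Finset.univ.toList Finset.univ.toList, fun x y =>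
    eval_protoX z0 f _ _ x y (by simp) (by simp)⟩

end protoexists

lemma commC_le_of_map {a b c d : ℕ} (G : Fin a → Fin b → Bool) (H : Fin c → Fin d → Bool)
    (σ : Fin a → Fin c) (τ : Fin b → Fin d) (hGH : ∀ i j, G i j = H (σ i) (τ j)) :
    commC G ≤ commC H := by
  have hne : {d' : ℕ | ∃ P : Protocol (Fin c) (Fin d) Bool,
      Computes P H ∧ P.depth = d'}.Nonempty := by
    obtain ⟨P, hP⟩ := exists_protocol false H
    exact ⟨P.depth, P, hP, rfl⟩
  obtain ⟨P, hP, hdP⟩ := Nat.sInf_mem hne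
  refine Nat.sInf_le ⟨P.comap σ τ, fun x y => ?_, by rw [Protocol.depth_comap]; exact hdP⟩
  rw [Protocol.eval_comap, hP, hGH]

lemma matD_le_of_map {a b c d : ℕ} (G : Matrix (Fin a) (Fin b) Bool)
    (H : Matrix (Fin c) (Fin d) Bool) (σ : Fin a → Fin c) (τ : Fin b → Fin d)
    (hGH : ∀ i j, G i j = H (σ i) (τ j)) : matD G ≤ matD H :=
  commC_le_of_map _ _ σ τ hGH

/-! ### Generalized Hölder and discrete Loomis–Whitney inequalities -/

open NNReal Finset in
lemma gh {α : Type} (A : Finset α) :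
    ∀ (k : ℕ), 0 < k → ∀ (f : Fin k → α → ℝ≥0),
    ∑ x ∈ A, ∏ i, (f i x) ^ ((k : ℝ)⁻¹) ≤ ∏ i, (∑ x ∈ A, f i x) ^ ((k : ℝ)⁻¹) := by
  intro k
  induction k with
  | zero => intro h; cases h.ne' rfl
  | succ k ih =>
    intro _ f
    rcases Nat.eq_zero_or_pos k with hk | hk
    · subst hk
      simp [Fin.prod_univ_one]
    have hkR : ((k:ℝ)) ≠ 0 := by positivity
    have hk1 : (1:ℝ) < ((k+1 : ℕ) : ℝ) := by
      have : (1:ℝ) < (k:ℝ) + 1 := by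
        have : (0:ℝ) < (k:ℝ) := by exact_mod_cast hk
        linarith
      simpa using this
    have hconj : (((k+1 : ℕ)) : ℝ).HolderConjugate (((k+1:ℕ):ℝ)/(k:ℕ)) := by
      rw [Real.holderConjugate_iff_eq_conjExponent hk1]
      push_cast
      simp
    have h1 : ∀ x : ℝ≥0, (x ^ (((k+1:ℕ):ℝ)⁻¹)) ^ (((k+1:ℕ)):ℝ) = x := by
      intro x
      rw [← NNReal.rpow_mul, inv_mul_cancel₀ (by positivity), NNReal.rpow_one]
    have h2 : ∀ x : ℝ≥0, (x ^ (((k+1:ℕ):ℝ)⁻¹)) ^ (((k+1:ℕ):ℝ)/(k:ℕ)) = x ^ ((k:ℝ)⁻¹) := by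
      intro x
      rw [← NNReal.rpow_mul]
      congr 1
      push_cast
      field_simp
    calc ∑ x ∈ A, ∏ i, (f i x) ^ (((k+1:ℕ) : ℝ)⁻¹)
        = ∑ x ∈ A, ((f 0 x) ^ (((k+1:ℕ):ℝ)⁻¹)) * ∏ i : Fin k, (f i.succ x) ^ (((k+1:ℕ):ℝ)⁻¹) := by
          refine Finset.sum_congr rfl fun x _ => ?_
          rw [Fin.prod_univ_succ]
      _ ≤ (∑ x ∈ A, ((f 0 x) ^ (((k+1:ℕ):ℝ)⁻¹)) ^ (((k+1:ℕ)):ℝ)) ^ (1/(((k+1:ℕ)):ℝ)) *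
          (∑ x ∈ A, (∏ i : Fin k, (f i.succ x) ^ (((k+1:ℕ):ℝ)⁻¹)) ^ (((k+1:ℕ):ℝ)/(k:ℕ))) ^ (1/(((k+1:ℕ):ℝ)/(k:ℕ))) :=
          NNReal.inner_le_Lp_mul_Lq A _ _ hconj
      _ = (∑ x ∈ A, f 0 x) ^ (((k+1:ℕ):ℝ)⁻¹) *
          (∑ x ∈ A, ∏ i : Fin k, (f i.succ x) ^ ((k:ℝ)⁻¹)) ^ ((k:ℝ)/((k+1:ℕ):ℝ)) := by
          congr 1
          · simp_rw [h1, one_div]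
          · congr 1
            · refine Finset.sum_congr rfl fun x _ => ?_
              rw [← NNReal.finset_prod_rpow]
              exact Finset.prod_congr rfl fun i _ => h2 _
            · rw [one_div_div]
      _ ≤ (∑ x ∈ A, f 0 x) ^ (((k+1:ℕ):ℝ)⁻¹) *
          (∏ i : Fin k, (∑ x ∈ A, f i.succ x) ^ ((k:ℝ)⁻¹)) ^ ((k:ℝ)/((k+1:ℕ):ℝ)) := by
          refine mul_le_mul_right (NNReal.rpow_le_rpow (ih hk _) (by positivity)) _
      _ = ∏ i : Fin (k+1), (∑ x ∈ A, f i x) ^ (((k+1:ℕ):ℝ)⁻¹) := by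
          rw [Fin.prod_univ_succ]
          congr 1
          rw [← NNReal.finset_prod_rpow]
          refine Finset.prod_congr rfl fun i _ => ?_
          rw [← NNReal.rpow_mul]
          congr 1
          push_cast
          field_simp

lemma succAbove_comm_last {k : ℕ} (i : Fin (k+1)) :
    (i.castSucc).succAbove (Fin.last k) = Fin.last (k+1) := by
  rw [Fin.succAbove_of_le_castSucc _ _ (by simpa using Fin.le_last i), Fin.succ_last]

lemma succAbove_comm_castSucc {k : ℕ} (i : Fin (k+1)) (j : Fin k) :
    (i.castSucc).succAbove (j.castSucc) = (i.succAbove j).castSucc := by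
  rcases lt_or_ge j.castSucc i with h | h
  · rw [Fin.succAbove_of_castSucc_lt _ _ h,
      Fin.succAbove_of_castSucc_lt _ _ (by simpa using h)]
  · rw [Fin.succAbove_of_le_castSucc _ _ h,
      Fin.succAbove_of_le_castSucc _ _ (by simpa using h), Fin.succ_castSucc]

open NNReal Finset in
lemma lw {α : Type} [DecidableEq α] :
    ∀ (k : ℕ) (C : Finset (Fin (k+1) → α)), C.Nonempty →
    ((C.card : ℝ≥0)) ^ (k : ℕ) ≤
      ∏ i : Fin (k+1), (((C.image (fun f => f ∘ i.succAbove)).card : ℝ≥0)) := by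
  intro k
  induction k with
  | zero =>
    intro C hC
    rw [pow_zero, Fin.prod_univ_one]
    have : 0 < (C.image (fun f => f ∘ (0 : Fin 1).succAbove)).card :=
      Finset.card_pos.2 (hC.image _)
    exact_mod_cast this
  | succ k ih =>
    intro C hC
    classical
    set lst := Fin.last (k+1) with hlst
    set V := C.image (fun f => f lst) with hV
    set F : α → Finset (Fin (k+2) → α) := fun a => C.filter (fun f => f lst = a) with hF
    set B : α → Finset (Fin (k+1) → α) := fun a => (F a).image (fun f => f ∘ Fin.castSucc)
      with hB
    have hcard : C.card = ∑ a ∈ V, (F a).card :=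
      Finset.card_eq_sum_card_fiberwise (fun f hf => Finset.mem_image_of_mem _ hf)
    have hFB : ∀ a, (F a).card = (B a).card := by
      intro a
      refine (Finset.card_image_of_injOn ?_).symm
      intro f hf g hg hfg
      funext j
      refine Fin.lastCases ?_ (fun j' => ?_) j
      · rw [(Finset.mem_filter.1 hf).2, (Finset.mem_filter.1 hg).2]
      · exact congrFun hfg j'
    have hBne : ∀ a ∈ V, (B a).Nonempty := by
      intro a ha
      obtain ⟨f, hf, hfa⟩ := Finset.mem_image.1 ha
      exact ⟨f ∘ Fin.castSucc, Finset.mem_image_of_mem _ (Finset.mem_filter.2 ⟨hf, hfa⟩)⟩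
    have hBsub : ∀ a, B a ⊆ C.image (fun f => f ∘ lst.succAbove) := by
      intro a
      rw [hlst, Fin.succAbove_last]
      exact Finset.image_subset_image (Finset.filter_subset _ _)
    have key2 : ∀ i : Fin (k+1),
        ∑ a ∈ V, ((B a).image (fun g => g ∘ i.succAbove)).card ≤
          (C.image (fun f => f ∘ (i.castSucc).succAbove)).card := by
      intro i
      set T : α → Finset (Fin (k+1) → α) :=
        fun a => ((B a).image (fun g => g ∘ i.succAbove)).image (fun h => Fin.snoc h a) with hT
      have hsnoc_inj : ∀ a : α,
          Function.Injective (fun h : Fin k → α => (Fin.snoc h a : Fin (k+1) → α)) := by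
        intro a h h' hhh
        funext j
        have := congrFun hhh (Fin.castSucc j)
        simpa using this
      have hTcard : ∀ a, (T a).card = ((B a).image (fun g => g ∘ i.succAbove)).card := by
        intro a
        exact Finset.card_image_of_injective _ (hsnoc_inj a)
      have hdisj : ∀ a ∈ V, ∀ a' ∈ V, a ≠ a' → Disjoint (T a) (T a') := by
        intro a _ a' _ haa
        rw [Finset.disjoint_left]
        rintro φ hφ hφ'
        obtain ⟨h, _, rfl⟩ := Finset.mem_image.1 hφ
        obtain ⟨h', _, heq⟩ := Finset.mem_image.1 hφ'
        apply haa
        have := congrFun heq (Fin.last k)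
        simpa using this.symm
      have hsub : V.biUnion T ⊆ C.image (fun f => f ∘ (i.castSucc).succAbove) := by
        intro φ hφ
        obtain ⟨a, _, hφa⟩ := Finset.mem_biUnion.1 hφ
        obtain ⟨h, hh, rfl⟩ := Finset.mem_image.1 hφa
        obtain ⟨g, hg, rfl⟩ := Finset.mem_image.1 hh
        obtain ⟨f, hf, rfl⟩ := Finset.mem_image.1 hg
        have hfC := (Finset.mem_filter.1 hf).1
        have hfa := (Finset.mem_filter.1 hf).2
        refine Finset.mem_image.2 ⟨f, hfC, ?_⟩
        funext j
        refine Fin.lastCases ?_ (fun j' => ?_) j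
        · show f ((i.castSucc).succAbove (Fin.last k)) = _
          rw [succAbove_comm_last]
          simpa using hfa
        · show f ((i.castSucc).succAbove (Fin.castSucc j')) = _
          rw [succAbove_comm_castSucc]
          simp [Function.comp]
      calc ∑ a ∈ V, ((B a).image (fun g => g ∘ i.succAbove)).card
          = ∑ a ∈ V, (T a).card := by
            exact Finset.sum_congr rfl fun a _ => (hTcard a).symm
        _ = (V.biUnion T).card := (Finset.card_biUnion hdisj).symm
        _ ≤ _ := Finset.card_le_card hsub
    set K1 : ℝ := ((k+1 : ℕ) : ℝ) with hK1
    have hK1pos : (0:ℝ) < K1 := by positivity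
    set P : Fin (k+2) → ℝ≥0 := fun j => ((C.image (fun f => f ∘ j.succAbove)).card : ℝ≥0)
      with hP
    have main : (C.card : ℝ≥0) ≤ (∏ j : Fin (k+2), P j) ^ (K1⁻¹) := by
      have step1 : (C.card : ℝ≥0) = ∑ a ∈ V, ((B a).card : ℝ≥0) := by
        rw [hcard]
        push_cast
        exact Finset.sum_congr rfl fun a _ => by rw [hFB]
      have step2 : ∀ a ∈ V, ((B a).card : ℝ≥0) ≤
          (P (Fin.last (k+1)) * ∏ i : Fin (k+1),
            (((B a).image (fun g => g ∘ i.succAbove)).card : ℝ≥0)) ^ (K1⁻¹) := by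
        intro a ha
        have h1 : ((B a).card : ℝ≥0) = (((B a).card : ℝ≥0) ^ ((k+1:ℕ) : ℕ)) ^ (K1⁻¹) := by
          rw [← NNReal.rpow_natCast _ (k+1), ← NNReal.rpow_mul, hK1,
            mul_inv_cancel₀ (by positivity), NNReal.rpow_one]
        rw [h1]
        refine NNReal.rpow_le_rpow ?_ (by positivity)
        rw [pow_succ, mul_comm]
        refine mul_le_mul' ?_ (ih (B a) (hBne a ha))
        show _ ≤ ((C.image (fun f => f ∘ (Fin.last (k+1)).succAbove)).card : ℝ≥0)
        simp only [hlst] at hBsub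
        exact_mod_cast Finset.card_le_card (hBsub a)
      have step3 : (C.card : ℝ≥0) ≤ P (Fin.last (k+1)) ^ (K1⁻¹) *
          ∑ a ∈ V, ∏ i : Fin (k+1),
            ((((B a).image (fun g => g ∘ i.succAbove)).card : ℝ≥0)) ^ (K1⁻¹) := by
        rw [step1, Finset.mul_sum]
        refine Finset.sum_le_sum fun a ha => ?_
        refine (step2 a ha).trans ?_
        rw [NNReal.mul_rpow, ← NNReal.finset_prod_rpow]
      have step4 : ∑ a ∈ V, ∏ i : Fin (k+1),
            ((((B a).image (fun g => g ∘ i.succAbove)).card : ℝ≥0)) ^ (K1⁻¹) ≤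
          ∏ i : Fin (k+1), (∑ a ∈ V,
            ((((B a).image (fun g => g ∘ i.succAbove)).card : ℝ≥0))) ^ (K1⁻¹) := by
        have := gh V (k+1) (Nat.succ_pos k)
          (fun i a => (((B a).image (fun g => g ∘ i.succAbove)).card : ℝ≥0))
        simpa [hK1] using this
      have step5 : ∀ i : Fin (k+1),
          (∑ a ∈ V, ((((B a).image (fun g => g ∘ i.succAbove)).card : ℝ≥0))) ≤ P i.castSucc := by
        intro i
        show _ ≤ ((C.image (fun f => f ∘ (i.castSucc).succAbove)).card : ℝ≥0)
        exact_mod_cast key2 i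
      calc (C.card : ℝ≥0)
          ≤ P (Fin.last (k+1)) ^ (K1⁻¹) *
            ∑ a ∈ V, ∏ i : Fin (k+1),
              ((((B a).image (fun g => g ∘ i.succAbove)).card : ℝ≥0)) ^ (K1⁻¹) := step3
        _ ≤ P (Fin.last (k+1)) ^ (K1⁻¹) *
            ∏ i : Fin (k+1), (P i.castSucc) ^ (K1⁻¹) := by
            refine mul_le_mul_right (step4.trans ?_) _
            exact Finset.prod_le_prod' fun i _ => NNReal.rpow_le_rpow (step5 i) (by positivity)
        _ = (∏ j : Fin (k+2), P j) ^ (K1⁻¹) := by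
            rw [NNReal.finset_prod_rpow, ← NNReal.mul_rpow]
            congr 1
            rw [mul_comm, ← Fin.prod_univ_castSucc]
    calc (C.card : ℝ≥0) ^ ((k+1 : ℕ) : ℕ)
        ≤ ((∏ j : Fin (k+2), P j) ^ (K1⁻¹)) ^ ((k+1:ℕ) : ℕ) :=
          pow_le_pow_left' main _
      _ = ∏ j : Fin (k+2), P j := by
          rw [← NNReal.rpow_natCast _ (k+1), ← NNReal.rpow_mul, hK1,
            inv_mul_cancel₀ (by positivity), NNReal.rpow_one]

open NNReal Finset in
lemma exists_delete {α : Type} [DecidableEq α] (k : ℕ) (C : Finset (Fin (k+1) → α))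
    (hC : C.Nonempty) :
    ∃ i : Fin (k+1), ((C.card : ℝ≥0)) ^ ((k : ℝ)/((k:ℝ)+1)) ≤
      ((C.image (fun f => f ∘ i.succAbove)).card : ℝ≥0) := by
  obtain ⟨i, _, hmax⟩ := Finset.exists_max_image Finset.univ
    (fun i : Fin (k+1) => ((C.image (fun f => f ∘ i.succAbove)).card : ℝ≥0)) ⟨0, Finset.mem_univ 0⟩
  refine ⟨i, ?_⟩
  have hlw := lw k C hC
  have hprod : ∏ j : Fin (k+1), ((C.image (fun f => f ∘ j.succAbove)).card : ℝ≥0) ≤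
      ((C.image (fun f => f ∘ i.succAbove)).card : ℝ≥0) ^ ((k+1 : ℕ)) := by
    calc ∏ j : Fin (k+1), ((C.image (fun f => f ∘ j.succAbove)).card : ℝ≥0)
        ≤ ∏ _j : Fin (k+1), ((C.image (fun f => f ∘ i.succAbove)).card : ℝ≥0) :=
          Finset.prod_le_prod' fun j _ => hmax j (Finset.mem_univ j)
      _ = _ := by rw [Finset.prod_const, Finset.card_univ, Fintype.card_fin]
  have h1 : ((C.card : ℝ≥0)) ^ (k : ℕ) ≤
      ((C.image (fun f => f ∘ i.succAbove)).card : ℝ≥0) ^ ((k+1:ℕ)) := hlw.trans hprod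
  have h2 := NNReal.rpow_le_rpow h1 (z := ((k:ℝ)+1)⁻¹) (by positivity)
  rw [← NNReal.rpow_natCast _ k, ← NNReal.rpow_natCast _ (k+1), ← NNReal.rpow_mul,
    ← NNReal.rpow_mul] at h2
  have e1 : ((k:ℝ)) * ((k:ℝ)+1)⁻¹ = (k:ℝ)/((k:ℝ)+1) := by ring
  have e2 : (((k+1:ℕ)):ℝ) * ((k:ℝ)+1)⁻¹ = 1 := by
    push_cast
    field_simp
  rw [e1, e2, NNReal.rpow_one] at h2
  exact h2

open NNReal Finset in
lemma chain {α : Type} [DecidableEq α] (ℓ : ℕ) (hℓ : 0 < ℓ) :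
    ∀ p, ℓ ≤ p → ∀ C : Finset (Fin p → α), C.Nonempty →
    ∃ e : Fin ℓ → Fin p, Function.Injective e ∧
      ((C.card : ℝ≥0)) ^ ((ℓ:ℝ)/(p:ℝ)) ≤ ((C.image (fun f => f ∘ e)).card : ℝ≥0) := by
  refine Nat.le_induction ?_ ?_
  · intro C hC
    refine ⟨id, Function.injective_id, ?_⟩
    have hd : ((ℓ:ℝ)/(ℓ:ℝ)) = 1 := by
      rw [div_self]
      exact_mod_cast hℓ.ne'
    rw [hd, NNReal.rpow_one]
    have : C.image (fun f => f ∘ id) = C := by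
      simp [Function.comp_id]
    rw [this]
  · intro p hp ih C hC
    obtain ⟨i, hi⟩ := exists_delete p C hC
    set C' := C.image (fun f => f ∘ i.succAbove) with hC'
    obtain ⟨e', he'inj, he'⟩ := ih C' (hC.image _)
    refine ⟨i.succAbove ∘ e', (Fin.succAbove_right_injective).comp he'inj, ?_⟩
    have himg : C.image (fun f => f ∘ (i.succAbove ∘ e')) = C'.image (fun f => f ∘ e') := by
      rw [hC', Finset.image_image]
      rfl
    rw [himg]
    have hppos : (0:ℝ) < (p:ℝ) := by
      have : 0 < p := lt_of_lt_of_le hℓ hp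
      exact_mod_cast this
    have hstep : ((C.card : ℝ≥0)) ^ ((ℓ:ℝ)/((p:ℝ)+1)) ≤ ((C'.card : ℝ≥0)) ^ ((ℓ:ℝ)/(p:ℝ)) := by
      have h2 := NNReal.rpow_le_rpow hi (z := (ℓ:ℝ)/(p:ℝ)) (by positivity)
      rw [← NNReal.rpow_mul] at h2
      have e1 : (p:ℝ)/((p:ℝ)+1) * ((ℓ:ℝ)/(p:ℝ)) = (ℓ:ℝ)/((p:ℝ)+1) := by
        field_simp
      rw [e1] at h2
      exact h2
    have hfin : ((ℓ:ℝ)/(((p+1:ℕ)):ℝ)) = (ℓ:ℝ)/((p:ℝ)+1) := by push_cast; ring_nf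
    rw [hfin]
    exact hstep.trans he'

/-! ### Arithmetic helpers -/

lemma div_eq_iff_block {m q r : ℕ} (hm : 0 < m) : r / m = q ↔ m*q ≤ r ∧ r < m*(q+1) := by
  have h1 := Nat.div_add_mod r m
  have h2 := Nat.mod_lt r hm
  constructor
  · rintro rfl
    have h3 : m*(r/m+1) = m*(r/m)+m := by ring
    omega
  · rintro ⟨ha, hb⟩
    have hc : r/m < q+1 := by
      rw [Nat.div_lt_iff_lt_mul hm]
      calc r < m*(q+1) := hb
        _ = (q+1)*m := by ring
    have hd : q ≤ r/m := by
      rw [Nat.le_div_iff_mul_le hm]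
      calc q*m = m*q := by ring
        _ ≤ r := ha
    omega

lemma val_bound {m p : ℕ} (q t : ℕ) (hq : q < p) (ht : t < m) : m*q + t < m*p := by
  have h : m*(q+1) = m*q + m := by ring
  calc m*q + t < m*(q+1) := by omega
    _ ≤ m*p := Nat.mul_le_mul_left m hq

lemma mul_add_mod_eq {m q t : ℕ} (ht : t < m) : (m*q + t) % m = t := by
  rw [add_comm, Nat.add_mul_mod_self_left, Nat.mod_eq_of_lt ht]

lemma mul_add_div_eq {m q t : ℕ} (hm : 0 < m) (ht : t < m) : (m*q + t) / m = q := by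
  rw [div_eq_iff_block hm]
  have h : m*(q+1) = m*q + m := by ring
  omega

lemma equip_default (m p : ℕ) (T : ℝ) (hT : ⌈T⌉₊ ≤ m)
    [DecidablePred fun r : Fin (m*p) => (r:ℕ) % m < ⌈T⌉₊] :
    Equipartitioned m T p ((Finset.univ : Finset (Fin (m*p))).filter
      (fun r => (r:ℕ) % m < ⌈T⌉₊)) := by
  intro γ hγ
  rcases Nat.eq_zero_or_pos m with hm | hm
  · subst hm
    have h0 : ⌈T⌉₊ = 0 := Nat.le_zero.1 hT
    conv_rhs => rw [h0]
    rw [Finset.card_eq_zero]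
    apply Finset.eq_empty_of_forall_notMem
    intro r _
    exact absurd r.isLt (by simp)
  · classical
    rw [Finset.filter_filter]
    refine Eq.trans ?_ (Finset.card_range ⌈T⌉₊)
    refine Finset.card_bij' (t := Finset.range ⌈T⌉₊) (fun r _ => (r:ℕ) % m)
      (fun t ht => (⟨m*γ + t, val_bound γ t hγ (lt_of_lt_of_le (Finset.mem_range.1 ht) hT)⟩
        : Fin (m*p)))
      ?_ ?_ ?_ ?_
    · intro r hr
      obtain ⟨-, h1, -, -⟩ := Finset.mem_filter.1 hr
      exact Finset.mem_range.2 h1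
    · intro t ht
      have htm : t < m := lt_of_lt_of_le (Finset.mem_range.1 ht) hT
      refine Finset.mem_filter.2 ⟨Finset.mem_univ _, ?_, ?_, ?_⟩
      · show (m*γ + t) % m < ⌈T⌉₊
        rw [mul_add_mod_eq htm]
        exact Finset.mem_range.1 ht
      · show m*γ ≤ m*γ + t
        omega
      · show m*γ + t < m*(γ+1)
        have h : m*(γ+1) = m*γ + m := by ring
        omega
    · intro r hr
      obtain ⟨-, -, h2, h3⟩ := Finset.mem_filter.1 hr
      apply Fin.ext
      show m*γ + (r:ℕ)%m = (r:ℕ)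
      have hdiv : (r:ℕ)/m = γ := (div_eq_iff_block hm).2 ⟨h2, h3⟩
      have := Nat.div_add_mod (r:ℕ) m
      rw [hdiv] at this
      omega
    · intro t ht
      have htm : t < m := lt_of_lt_of_le (Finset.mem_range.1 ht) hT
      show (m*γ + t) % m = t
      exact mul_add_mod_eq htm

open Classical in
noncomputable def projR {m p ℓ : ℕ} (e : Fin ℓ → Fin p) (R : Finset (Fin (m*p))) :
    Finset (Fin (m*ℓ)) :=
  Finset.univ.filter (fun s => ∃ r ∈ R, (r:ℕ)%m = (s:ℕ)%m ∧
    (r:ℕ)/m = ((e ⟨(s:ℕ)/m, Nat.div_lt_of_lt_mul s.isLt⟩ : Fin p) : ℕ))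

lemma filter_div_eq {m p : ℕ} (hm : 0 < m) (R : Finset (Fin (m*p))) (q : ℕ)
    [DecidablePred fun r : Fin (m*p) => (r:ℕ)/m = q]
    [DecidablePred fun r : Fin (m*p) => m*q ≤ (r:ℕ) ∧ (r:ℕ) < m*(q+1)] :
    R.filter (fun r : Fin (m*p) => (r:ℕ)/m = q) =
      R.filter (fun r : Fin (m*p) => m*q ≤ (r:ℕ) ∧ (r:ℕ) < m*(q+1)) :=
  Finset.filter_congr fun r _ => by
    rw [div_eq_iff_block hm]

lemma theta_mem {m p ℓ : ℕ} (hm : 0 < m) (e : Fin ℓ → Fin p) (R : Finset (Fin (m*p)))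
    (s : Fin (m*ℓ)) (hs : s ∈ projR e R) :
    (⟨m * ((e ⟨(s:ℕ)/m, Nat.div_lt_of_lt_mul s.isLt⟩ : Fin p) : ℕ) + (s:ℕ)%m,
      val_bound _ _ (e _).isLt (Nat.mod_lt _ hm)⟩ : Fin (m*p)) ∈ R := by
  obtain ⟨-, r, hr, hmod, hdiv⟩ := Finset.mem_filter.1 hs
  have : (r:ℕ) = m * ((e ⟨(s:ℕ)/m, Nat.div_lt_of_lt_mul s.isLt⟩ : Fin p) : ℕ) + (s:ℕ)%m := by
    rw [← hdiv, ← hmod]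
    exact (Nat.div_add_mod (r:ℕ) m).symm
  have heq : (⟨m * ((e ⟨(s:ℕ)/m, Nat.div_lt_of_lt_mul s.isLt⟩ : Fin p) : ℕ) + (s:ℕ)%m,
      val_bound _ _ (e _).isLt (Nat.mod_lt _ hm)⟩ : Fin (m*p)) = r := Fin.ext this.symm
  rwa [heq]

lemma projR_block_card {m p ℓ : ℕ} (hm : 0 < m) (e : Fin ℓ → Fin p)
    (R : Finset (Fin (m*p))) (γ0 : ℕ) (hγ0 : γ0 < ℓ)
    [DecidablePred fun s : Fin (m*ℓ) => m * γ0 ≤ (s:ℕ) ∧ (s:ℕ) < m*(γ0+1)]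
    [DecidablePred fun r : Fin (m*p) => (r:ℕ)/m = ((e ⟨γ0, hγ0⟩ : Fin p) : ℕ)] :
    ((projR e R).filter (fun s : Fin (m*ℓ) => m * γ0 ≤ (s:ℕ) ∧ (s:ℕ) < m*(γ0+1))).card
      = (R.filter (fun r : Fin (m*p) => (r:ℕ)/m = ((e ⟨γ0, hγ0⟩ : Fin p) : ℕ))).card := by
  classical
  refine Finset.card_bij'
    (fun s _ => (⟨m * ((e ⟨γ0, hγ0⟩ : Fin p) : ℕ) + (s:ℕ)%m,
      val_bound _ _ (e _).isLt (Nat.mod_lt _ hm)⟩ : Fin (m*p)))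
    (fun r _ => (⟨m * γ0 + (r:ℕ)%m, val_bound _ _ hγ0 (Nat.mod_lt _ hm)⟩ : Fin (m*ℓ)))
    ?_ ?_ ?_ ?_ <;> beta_reduce
  case _ =>
    intro s hs
    obtain ⟨hs1, hb1, hb2⟩ := Finset.mem_filter.1 hs
    have hdivs : (s:ℕ)/m = γ0 := (div_eq_iff_block hm).2 ⟨hb1, hb2⟩
    obtain ⟨-, r, hr, hmod, hdiv⟩ := Finset.mem_filter.1 hs1
    have hidx : (⟨(s:ℕ)/m, Nat.div_lt_of_lt_mul s.isLt⟩ : Fin ℓ) = ⟨γ0, hγ0⟩ := Fin.ext hdivs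
    rw [hidx] at hdiv
    have hrval : (r:ℕ) = m * ((e ⟨γ0, hγ0⟩ : Fin p) : ℕ) + (s:ℕ)%m := by
      rw [← hdiv, ← hmod]
      exact (Nat.div_add_mod (r:ℕ) m).symm
    refine Finset.mem_filter.2 ⟨?_, ?_⟩
    · have hthis : ∀ h, (⟨m * ((e ⟨γ0, hγ0⟩ : Fin p) : ℕ) + (s:ℕ)%m, h⟩ : Fin (m*p)) = r :=
        fun h => Fin.ext hrval.symm
      exact (hthis _).symm ▸ hr
    · show (m * ((e ⟨γ0, hγ0⟩ : Fin p) : ℕ) + (s:ℕ)%m) / m = _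
      exact mul_add_div_eq hm (Nat.mod_lt _ hm)
  · intro r hr
    obtain ⟨hrR, hrdiv⟩ := Finset.mem_filter.1 hr
    have hsm : (m*γ0 + (r:ℕ)%m) % m = (r:ℕ)%m := mul_add_mod_eq (Nat.mod_lt _ hm)
    have hsd : (m*γ0 + (r:ℕ)%m) / m = γ0 := mul_add_div_eq hm (Nat.mod_lt _ hm)
    refine Finset.mem_filter.2 ⟨Finset.mem_filter.2 ⟨Finset.mem_univ _, r, hrR, ?_, ?_⟩, ?_, ?_⟩
    · show (r:ℕ)%m = (m*γ0 + (r:ℕ)%m) % m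
      rw [hsm]
    · have hidx : ∀ h, (⟨(m*γ0 + (r:ℕ)%m)/m, h⟩ : Fin ℓ) = ⟨γ0, hγ0⟩ :=
        fun h => Fin.ext hsd
      rw [hidx]
      exact hrdiv
    · show m*γ0 ≤ m*γ0 + (r:ℕ)%m
      omega
    · show m*γ0 + (r:ℕ)%m < m*(γ0+1)
      have h1 : (r:ℕ)%m < m := Nat.mod_lt _ hm
      have h2 : m*(γ0+1) = m*γ0 + m := by ring
      omega
  · intro s hs
    obtain ⟨-, hb1, hb2⟩ := Finset.mem_filter.1 hs
    have hdivs : (s:ℕ)/m = γ0 := (div_eq_iff_block hm).2 ⟨hb1, hb2⟩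
    apply Fin.ext
    show m*γ0 + (m * ((e ⟨γ0, hγ0⟩ : Fin p) : ℕ) + (s:ℕ)%m) % m = (s:ℕ)
    rw [mul_add_mod_eq (Nat.mod_lt _ hm)]
    have := Nat.div_add_mod (s:ℕ) m
    rw [hdivs] at this
    omega
  · intro r hr
    obtain ⟨-, hrdiv⟩ := Finset.mem_filter.1 hr
    apply Fin.ext
    show m * ((e ⟨γ0, hγ0⟩ : Fin p) : ℕ) + (m*γ0 + (r:ℕ)%m) % m = (r:ℕ)
    rw [mul_add_mod_eq (Nat.mod_lt _ hm), ← hrdiv]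
    exact Nat.div_add_mod (r:ℕ) m

lemma digit_proj {n p ℓ : ℕ} (e : Fin ℓ → Fin p) (c : Fin (n^p)) (γ : Fin ℓ) :
    ((finFunctionFinEquiv ((finFunctionFinEquiv.symm c) ∘ e) : Fin (n^ℓ)) : ℕ) / n ^ (γ:ℕ) % n
      = (c:ℕ) / n ^ ((e γ : Fin p):ℕ) % n := by
  have h1 : (finFunctionFinEquiv.symm
      (finFunctionFinEquiv ((finFunctionFinEquiv.symm c) ∘ e))) γ
      = (finFunctionFinEquiv.symm c) (e γ) := by
    rw [Equiv.symm_apply_apply]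
    rfl
  calc ((finFunctionFinEquiv ((finFunctionFinEquiv.symm c) ∘ e) : Fin (n^ℓ)) : ℕ) / n ^ (γ:ℕ) % n
      = ((finFunctionFinEquiv.symm
          (finFunctionFinEquiv ((finFunctionFinEquiv.symm c) ∘ e))) γ : ℕ) := rfl
    _ = ((finFunctionFinEquiv.symm c) (e γ) : ℕ) := by rw [h1]
    _ = (c:ℕ) / n ^ ((e γ : Fin p):ℕ) % n := rfl

lemma interlace_proj {m n p ℓ : ℕ} (hm : 0 < m) (M : Matrix (Fin m) (Fin n) Bool)
    (e : Fin ℓ → Fin p) (s : Fin (m*ℓ)) (c : Fin (n^p)) :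
    interlace M ℓ s (finFunctionFinEquiv ((finFunctionFinEquiv.symm c) ∘ e))
      = interlace M p
          ⟨m * ((e ⟨(s:ℕ)/m, Nat.div_lt_of_lt_mul s.isLt⟩ : Fin p) : ℕ) + (s:ℕ)%m,
            val_bound _ _ (e _).isLt (Nat.mod_lt _ hm)⟩ c := by
  have hv1 : ((m * ((e ⟨(s:ℕ)/m, Nat.div_lt_of_lt_mul s.isLt⟩ : Fin p) : ℕ) + (s:ℕ)%m) % m)
      = (s:ℕ)%m := mul_add_mod_eq (Nat.mod_lt _ hm)
  have hv2 : ((m * ((e ⟨(s:ℕ)/m, Nat.div_lt_of_lt_mul s.isLt⟩ : Fin p) : ℕ) + (s:ℕ)%m) / m)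
      = ((e ⟨(s:ℕ)/m, Nat.div_lt_of_lt_mul s.isLt⟩ : Fin p) : ℕ) :=
    mul_add_div_eq hm (Nat.mod_lt _ hm)
  simp only [interlace, Matrix.of_apply]
  refine congrArg₂ (fun a b => M a b) (Fin.ext ?_) (Fin.ext ?_)
  · exact hv1.symm
  · show ((finFunctionFinEquiv ((finFunctionFinEquiv.symm c) ∘ e) : Fin (n^ℓ)) : ℕ)
        / n ^ ((s:ℕ)/m) % n = (c:ℕ) / n ^ (_ / m) % n
    rw [hv2]
    exact digit_proj e c ⟨(s:ℕ)/m, Nat.div_lt_of_lt_mul s.isLt⟩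

theorem extended_maximum_projection {m n : ℕ} (M : Matrix (Fin m) (Fin n) Bool)
    (ℓ p : ℕ) (hℓ : 1 ≤ ℓ) (hℓp : ℓ ≤ p)
    (x y : ℝ) (hx0 : 0 < x) (hx : x ≤ 1) (hy0 : 0 < y) (hy : y ≤ 1) :
    bracketD M ((ℓ : ℕ) : ℝ) x (y ^ ((ℓ : ℝ) / (p : ℝ))) ≤ bracketD M ((p : ℕ) : ℝ) x y := by
  classical
  have hp0 : 0 < p := lt_of_lt_of_le hℓ hℓp
  have hy'0 : 0 < y ^ ((ℓ:ℝ)/(p:ℝ)) := Real.rpow_pos_of_pos hy0 _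
  have hy'1 : y ^ ((ℓ:ℝ)/(p:ℝ)) ≤ 1 := Real.rpow_le_one hy0.le hy (by positivity)
  simp only [bracketD]
  generalize hQ : (⌈((ℓ:ℕ):ℝ)⌉₊ : ℕ) = K
  rw [Nat.ceil_natCast] at hQ
  subst hQ
  generalize hQ' : (⌈((p:ℕ):ℝ)⌉₊ : ℕ) = K'
  rw [Nat.ceil_natCast] at hQ'
  subst hQ'
  -- default witnesses showing the p-bracket set is nonempty
  have hTm : ⌈(m:ℝ)*x⌉₊ ≤ m := by
    rw [Nat.ceil_le]
    calc (m:ℝ)*x ≤ (m:ℝ)*1 := mul_le_mul_of_nonneg_left hx (Nat.cast_nonneg m)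
      _ = (m:ℝ) := mul_one _
  have hCp : ⌈(n:ℝ)^(p:ℕ) * y⌉₊ ≤ n^p := by
    rw [Nat.ceil_le]
    push_cast
    calc (n:ℝ)^(p:ℕ) * y ≤ (n:ℝ)^(p:ℕ) * 1 := mul_le_mul_of_nonneg_left hy (by positivity)
      _ = _ := mul_one _
  obtain ⟨C0, -, hC0card⟩ := Finset.exists_subset_card_eq (s := (Finset.univ : Finset (Fin (n^p))))
    (n := ⌈(n:ℝ)^(p:ℕ) * y⌉₊) (by rw [Finset.card_univ, Fintype.card_fin]; exact hCp)
  have hSpne : {d : ℕ | ∃ (R : Finset (Fin (m*p))) (C : Finset (Fin (n^p))),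
      Equipartitioned m ((m:ℝ)*x) p R ∧ C.card = ⌈(n:ℝ)^(p:ℕ)*y⌉₊ ∧
      d = matD (extract (interlace M p) R C)}.Nonempty :=
    ⟨_, ⟨Finset.univ.filter (fun r : Fin (m*p) => (r:ℕ)%m < ⌈(m:ℝ)*x⌉₊), C0,
      equip_default m p _ hTm, hC0card, rfl⟩⟩
  obtain ⟨R, C, hRe, hCc, hdv⟩ := Nat.sInf_mem hSpne
  rw [hdv]
  rcases Nat.eq_zero_or_pos m with hm | hm
  · -- m = 0 : the ℓ-extraction has no rows, hence complexity 0
    subst hm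
    have hC'le : ⌈(n:ℝ)^(ℓ:ℕ) * (y ^ ((ℓ:ℝ)/(p:ℝ)))⌉₊ ≤ n^ℓ := by
      rw [Nat.ceil_le]
      push_cast
      calc (n:ℝ)^(ℓ:ℕ) * (y ^ ((ℓ:ℝ)/(p:ℝ))) ≤ (n:ℝ)^(ℓ:ℕ) * 1 :=
            mul_le_mul_of_nonneg_left hy'1 (by positivity)
        _ = _ := mul_one _
    obtain ⟨D', -, hD'card⟩ := Finset.exists_subset_card_eq (s := (Finset.univ : Finset (Fin (n^ℓ))))
      (n := ⌈(n:ℝ)^(ℓ:ℕ) * (y ^ ((ℓ:ℝ)/(p:ℝ)))⌉₊)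
      (by rw [Finset.card_univ, Fintype.card_fin]; exact hC'le)
    set R' := Finset.univ.filter
      (fun r : Fin (0*ℓ) => (r:ℕ)%0 < ⌈((0:ℕ):ℝ)*x⌉₊) with hR'
    have hR'e : Equipartitioned 0 (((0:ℕ):ℝ)*x) ℓ R' := equip_default 0 ℓ _ (by simp)
    have hR'card : R'.card = 0 := by
      rw [Finset.card_eq_zero]
      apply Finset.eq_empty_of_forall_notMem
      intro r _
      exact absurd r.isLt (by simp)
    have hz : matD (extract (interlace M ℓ) R' D') = 0 := by
      apply Nat.eq_zero_of_le_zero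
      apply Nat.sInf_le
      refine ⟨.leaf false, fun i _ => ?_, rfl⟩
      exact absurd (lt_of_lt_of_le i.isLt hR'card.le) (Nat.not_lt_zero _)
    refine le_trans (Nat.sInf_le ⟨R', D', hR'e, hD'card, rfl⟩) ?_
    rw [hz]
    exact Nat.zero_le _
  rcases Nat.eq_zero_or_pos n with hn | hn
  · -- n = 0 : the ℓ-extraction has no columns, hence complexity 0
    subst hn
    set R' := Finset.univ.filter
      (fun r : Fin (m*ℓ) => (r:ℕ)%m < ⌈(m:ℝ)*x⌉₊) with hR'
    have hR'e : Equipartitioned m ((m:ℝ)*x) ℓ R' := equip_default m ℓ _ hTm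
    have hcol0 : ((∅ : Finset (Fin (0^ℓ))).card : ℕ)
        = ⌈((0:ℕ):ℝ)^(ℓ:ℕ) * (y ^ ((ℓ:ℝ)/(p:ℝ)))⌉₊ := by
      rw [Finset.card_empty]
      have hℓ0 : ℓ ≠ 0 := Nat.one_le_iff_ne_zero.1 hℓ
      rw [show ((0:ℕ):ℝ) = (0:ℝ) by norm_num, zero_pow hℓ0, zero_mul]
      simp
    have hz : matD (extract (interlace M ℓ) R' (∅ : Finset (Fin (0^ℓ)))) = 0 := by
      apply Nat.eq_zero_of_le_zero
      apply Nat.sInf_le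
      refine ⟨.leaf false, fun _ j => ?_, rfl⟩
      exact absurd (lt_of_lt_of_le j.isLt Finset.card_empty.le) (Nat.not_lt_zero _)
    refine le_trans (Nat.sInf_le ⟨R', ∅, hR'e, hcol0, rfl⟩) ?_
    rw [hz]
    exact Nat.zero_le _
  -- main case : m > 0 and n > 0
  have hCpos : 0 < C.card := by
    rw [hCc]
    apply Nat.ceil_pos.2
    positivity
  set Cf := C.image (fun c : Fin (n^p) => (finFunctionFinEquiv.symm c : Fin p → Fin n))
    with hCf
  have hCfcard : Cf.card = C.card :=
    Finset.card_image_of_injective _ (Equiv.injective _)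
  have hCfne : Cf.Nonempty := Finset.card_pos.1 (by rw [hCfcard]; exact hCpos)
  obtain ⟨e, heinj, he⟩ := chain ℓ hℓ p hℓp Cf hCfne
  set π : Fin (n^p) → Fin (n^ℓ) :=
    fun c => finFunctionFinEquiv ((finFunctionFinEquiv.symm c) ∘ e) with hπ
  have himg : (Cf.image (fun f => f ∘ e)).image (finFunctionFinEquiv) = C.image π := by
    rw [hCf, Finset.image_image, Finset.image_image]
    rfl
  have hD0c : (C.image π).card = (Cf.image (fun f => f ∘ e)).card := by
    rw [← himg, Finset.card_image_of_injective _ (Equiv.injective _)]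
  -- the projected column set is large enough
  have h1 : ((C.card:ℝ)) ^ ((ℓ:ℝ)/(p:ℝ)) ≤ ((C.image π).card : ℝ) := by
    have h2 : ((C.card : NNReal)) ^ ((ℓ:ℝ)/(p:ℝ)) ≤ (((C.image π).card : ℕ) : NNReal) := by
      rw [← hCfcard, hD0c]
      exact he
    have h3 := NNReal.coe_le_coe.2 h2
    rw [NNReal.coe_rpow] at h3
    push_cast at h3 ⊢
    exact h3
  have hreal : (n:ℝ)^(ℓ:ℕ) * (y ^ ((ℓ:ℝ)/(p:ℝ))) ≤ ((C.image π).card : ℝ) := by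
    have hyC : (n:ℝ)^(p:ℕ) * y ≤ (C.card : ℝ) := by
      rw [hCc]
      exact Nat.le_ceil _
    calc (n:ℝ)^(ℓ:ℕ) * (y ^ ((ℓ:ℝ)/(p:ℝ)))
        = ((n:ℝ)^(p:ℕ) * y) ^ ((ℓ:ℝ)/(p:ℝ)) := by
          rw [Real.mul_rpow (by positivity) hy0.le, ← Real.rpow_natCast (n:ℝ) p,
            ← Real.rpow_mul (by positivity),
            show ((p:ℝ) * ((ℓ:ℝ)/(p:ℝ))) = ((ℓ:ℕ):ℝ) by
              field_simp,
            Real.rpow_natCast]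
      _ ≤ ((C.card:ℝ)) ^ ((ℓ:ℝ)/(p:ℝ)) :=
          Real.rpow_le_rpow (by positivity) hyC (by positivity)
      _ ≤ _ := h1
  have hceil : ⌈(n:ℝ)^(ℓ:ℕ) * (y ^ ((ℓ:ℝ)/(p:ℝ)))⌉₊ ≤ (C.image π).card := Nat.ceil_le.2 hreal
  obtain ⟨D', hD'sub, hD'card⟩ := Finset.exists_subset_card_eq hceil
  -- equipartitioned row selection
  have hS'e : Equipartitioned m ((m:ℝ)*x) ℓ (projR e R) := by
    intro γ0 hγ0
    rw [projR_block_card hm e R γ0 hγ0, filter_div_eq hm R _]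
    exact hRe _ (e ⟨γ0, hγ0⟩).isLt
  refine le_trans (Nat.sInf_le ⟨projR e R, D', hS'e, hD'card, rfl⟩) ?_
  -- the ℓ-extraction is a subgame of the p-extraction
  choose cf hcf1 hcf2 using
    (fun j : Fin D'.card => Finset.mem_image.1 (hD'sub (D'.orderIsoOfFin rfl j).2))
  refine matD_le_of_map _ _
    (fun i => (R.orderIsoOfFin rfl).symm
      ⟨_, theta_mem hm e R _ ((projR e R).orderIsoOfFin rfl i).2⟩)
    (fun j => (C.orderIsoOfFin rfl).symm ⟨cf j, hcf1 j⟩)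
    (fun i j => ?_)
  show interlace M ℓ _ _ = interlace M p _ _
  simp only [OrderIso.apply_symm_apply]
  rw [← hcf2 j]
  exact interlace_proj hm M e _ (cf j)
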